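/- For every z ∈ U, the sphere with center X(z) + ρ(z)·N(z) and radius |ρ(z)|, where ρ(z) = −h(z)·(T(z)²|f'(z)|²/(8|g'(z)|²) + 1/2), passes through the origin; equivalently, ‖X(z) + ρ(z)·N(z)‖² = ρ(z)². (This is the defining property of SS-surfaces: ρ equals H/K + ψ/2 where H, K are the mean and Gauss curvatures and ψ = ⟨X, N⟩ is the support function, and the identity is equivalent to the generalized Weingarten relation 2ψH + (Λ + ψ²)K = 0 with Λ = ⟨X, X⟩.) -/

import Mathlib

/-!
Write `p = g'`, `q = g`, `w = f'`, `c = ⟨p, q w⟩`, `T = 1 + |q|²` and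
`V = (A, -2c) = tangentVec p q w`, so that `X + ρN = (h / (2|p|²)) V + (h + ρ) N`.
The Gauss map `N` is a unit vector, and `V` is orthogonal to it because `⟨A, q⟩ = (1 - |q|²) c`;
moreover `|A|² = T²|p|²|w|² - 4c²`, so `|V|² = T²|p|²|w|²`. Hence
`‖X + ρN‖² = h² T² |w|² / (4|p|²) + (h + ρ)²`, which equals `ρ²` for the given `ρ`.
-/

/-- `⟨a,b⟩ := Re (a * conj b)` for complex numbers. -/
noncomputable def cinner (a b : ℂ) : ℝ := (a * (starRingEnd ℂ) b).re

def dot3 (v w : ℝ × ℝ × ℝ) : ℝ := v.1 * w.1 + v.2.1 * w.2.1 + v.2.2 * w.2.2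

open ComplexConjugate

lemma dot3_smul_add_smul_self {v n : ℝ × ℝ × ℝ} (hn : dot3 n n = 1) (hvn : dot3 v n = 0)
    (a b : ℝ) : dot3 (a • v + b • n) (a • v + b • n) = a ^ 2 * dot3 v v + b ^ 2 := by
  simp only [dot3, Prod.fst_add, Prod.snd_add, Prod.smul_fst, Prod.smul_snd, smul_eq_mul]
    at hn hvn ⊢
  linear_combination b ^ 2 * hn + 2 * a * b * hvn

noncomputable def invStereographic (q : ℂ) : ℝ × ℝ × ℝ :=
  (2 * q.re / (1 + ‖q‖ ^ 2), 2 * q.im / (1 + ‖q‖ ^ 2), (1 - ‖q‖ ^ 2) / (1 + ‖q‖ ^ 2))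

lemma dot3_invStereographic_self (q : ℂ) :
    dot3 (invStereographic q) (invStereographic q) = 1 := by
  have hT : (1 + ‖q‖ ^ 2 : ℝ) ≠ 0 := by positivity
  simp only [dot3, invStereographic]
  field_simp
  rw [Complex.sq_norm, Complex.normSq_apply]
  ring

noncomputable def tangentVec (p q w : ℂ) : ℝ × ℝ × ℝ :=
  let A := ((1 + ‖q‖ ^ 2 : ℝ) : ℂ) * p * conj w - 2 * q * (cinner p (q * w) : ℂ)
  (A.re, A.im, -2 * cinner p (q * w))

lemma cinner_eq_re_mul_add_im_mul (a b : ℂ) : cinner a b = a.re * b.re + a.im * b.im := by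
  simp [cinner, Complex.mul_re]

lemma dot3_tangentVec_invStereographic (p q w : ℂ) :
    dot3 (tangentVec p q w) (invStereographic q) = 0 := by
  set c := cinner p (q * w)
  set A := ((1 + ‖q‖ ^ 2 : ℝ) : ℂ) * p * conj w - 2 * q * (c : ℂ)
  have hAq : cinner A q = (1 - ‖q‖ ^ 2) * c := by
    simp only [A, c, cinner_eq_re_mul_add_im_mul, Complex.sq_norm, Complex.normSq_apply,
      Complex.mul_re, Complex.mul_im, Complex.sub_re, Complex.sub_im, Complex.ofReal_re,
      Complex.ofReal_im, Complex.conj_re, Complex.conj_im, Complex.re_ofNat, Complex.im_ofNat]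
    ring
  have hT : (1 + ‖q‖ ^ 2 : ℝ) ≠ 0 := by positivity
  simp only [dot3, tangentVec, invStereographic]
  rw [cinner_eq_re_mul_add_im_mul] at hAq
  field_simp
  linear_combination 2 * hAq

lemma dot3_tangentVec_self (p q w : ℂ) :
    dot3 (tangentVec p q w) (tangentVec p q w) = (1 + ‖q‖ ^ 2) ^ 2 * ‖p‖ ^ 2 * ‖w‖ ^ 2 := by
  set c := cinner p (q * w)
  set A := ((1 + ‖q‖ ^ 2 : ℝ) : ℂ) * p * conj w - 2 * q * (c : ℂ)
  have hA : ‖A‖ ^ 2 = (1 + ‖q‖ ^ 2) ^ 2 * ‖p‖ ^ 2 * ‖w‖ ^ 2 - 4 * c ^ 2 := by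
    simp only [A, c, cinner_eq_re_mul_add_im_mul, Complex.sq_norm, Complex.normSq_apply,
      Complex.mul_re, Complex.mul_im, Complex.sub_re, Complex.sub_im, Complex.ofReal_re,
      Complex.ofReal_im, Complex.conj_re, Complex.conj_im, Complex.re_ofNat, Complex.im_ofNat]
    ring
  simp only [dot3, tangentVec]
  rw [Complex.sq_norm, Complex.normSq_apply] at hA
  linear_combination hA

theorem ss_sphere_through_origin_general
    (U : Set ℂ)
    (f' g g' : ℂ → ℂ)
    (hgne : ∀ z ∈ U, g' z ≠ 0)
    (T h : ℂ → ℝ)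
    (hT : ∀ z, T z = 1 + ‖g z‖ ^ 2)
    (N : ℂ → ℝ × ℝ × ℝ)
    (hN : ∀ z, N z = (2 * (g z).re / T z, 2 * (g z).im / T z,
        (1 - ‖g z‖ ^ 2) / T z))
    (A : ℂ → ℂ)
    (hA : ∀ z, A z = (T z : ℂ) * g' z * (starRingEnd ℂ) (f' z)
        - 2 * g z * ((cinner (g' z) (g z * f' z) : ℝ) : ℂ))
    (X : ℂ → ℝ × ℝ × ℝ)
    (hX : ∀ z, X z = (h z / (2 * ‖g' z‖ ^ 2)) •
          (((A z).re, (A z).im, -2 * cinner (g' z) (g z * f' z)) : ℝ × ℝ × ℝ)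
        + h z • N z)
    (ρ : ℂ → ℝ)
    (hρ : ∀ z, ρ z = -(h z) * (T z ^ 2 * ‖f' z‖ ^ 2
        / (8 * ‖g' z‖ ^ 2) + 1 / 2))
    : ∀ z ∈ U,
      dot3 (X z + ρ z • N z) (X z + ρ z • N z) = ρ z ^ 2 := by
  intro z hz
  have hNz : N z = invStereographic (g z) := by rw [hN, hT]; rfl
  have hXz : X z + ρ z • N z = (h z / (2 * ‖g' z‖ ^ 2)) • tangentVec (g' z) (g z) (f' z)
      + (h z + ρ z) • invStereographic (g z) := by
    rw [hX, hA, hT, hNz, add_smul, add_assoc]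
    rfl
  have hg' : ‖g' z‖ ≠ 0 := norm_ne_zero_iff.mpr (hgne z hz)
  rw [hXz, dot3_smul_add_smul_self (dot3_invStereographic_self _)
    (dot3_tangentVec_invStereographic _ _ _), dot3_tangentVec_self, hρ, ← hT]
  field_simp
  ring

/-- the middle-type sphere of radius `|ρ|` centered at `X + ρ·N`,
with `ρ = −h·(T²|f'|²/(8|g'|²) + 1/2)`, passes through the origin:
`‖X + ρ·N‖² = ρ²`  (the defining property of SS-surfaces). -/
theorem ss_sphere_through_origin
    (U : Set ℂ) (hU : IsOpen U)
    (f f' g g' : ℂ → ℂ)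
    (hf : ∀ z ∈ U, HasDerivAt f (f' z) z)
    (hg : ∀ z ∈ U, HasDerivAt g (g' z) z)
    (hgne : ∀ z ∈ U, g' z ≠ 0)
    (T h : ℂ → ℝ)
    (hT : ∀ z, T z = 1 + ‖g z‖ ^ 2)
    (hh : ∀ z, h z = Real.exp (f z).re)
    (N : ℂ → ℝ × ℝ × ℝ)
    (hN : ∀ z, N z = (2 * (g z).re / T z, 2 * (g z).im / T z,
        (1 - ‖g z‖ ^ 2) / T z))
    (A : ℂ → ℂ)
    (hA : ∀ z, A z = (T z : ℂ) * g' z * (starRingEnd ℂ) (f' z)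
        - 2 * g z * ((cinner (g' z) (g z * f' z) : ℝ) : ℂ))
    (X : ℂ → ℝ × ℝ × ℝ)
    (hX : ∀ z, X z = (h z / (2 * ‖g' z‖ ^ 2)) •
          (((A z).re, (A z).im, -2 * cinner (g' z) (g z * f' z)) : ℝ × ℝ × ℝ)
        + h z • N z)
    (ρ : ℂ → ℝ)
    (hρ : ∀ z, ρ z = -(h z) * (T z ^ 2 * ‖f' z‖ ^ 2
        / (8 * ‖g' z‖ ^ 2) + 1 / 2))
    : ∀ z ∈ U,
      dot3 (X z + ρ z • N z) (X z + ρ z • N z) = ρ z ^ 2 :=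
  ss_sphere_through_origin_general U f' g g' hgne T h hT N hN A hA X hX ρ hρ
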